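/- For u(x) = |x|²/2 + c|x|^{2-n} (n ≥ 3), one has ∑_{j=1}^n u₁ · cof(D²u)_{1j} · x_j = x₁² - c·n(n-2)|x|^{-n}x₁² + O(|x|^{1-n}) as |x| → ∞, where u₁ = ∂u/∂x₁. -/

import Mathlib

open EuclideanSpace Metric

/-- Partial derivative in direction `i`. -/
noncomputable def pd {n : ℕ} (f : EuclideanSpace ℝ (Fin n) → ℝ) (i : Fin n)
    (x : EuclideanSpace ℝ (Fin n)) : ℝ :=
  fderiv ℝ f x (EuclideanSpace.single i 1)

/-- Second partial derivative `∂_i ∂_j f`. -/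
noncomputable def pd2 {n : ℕ} (f : EuclideanSpace ℝ (Fin n) → ℝ) (i j : Fin n)
    (x : EuclideanSpace ℝ (Fin n)) : ℝ :=
  pd (pd f j) i x

/-- Hessian matrix of `f` at `x`. -/
noncomputable def hess {n : ℕ} (f : EuclideanSpace ℝ (Fin n) → ℝ)
    (x : EuclideanSpace ℝ (Fin n)) : Matrix (Fin n) (Fin n) ℝ :=
  Matrix.of fun i j => pd2 f i j x

/-- The `(i,j)` cofactor of a matrix. -/
noncomputable def cof {n : ℕ} (M : Matrix (Fin n) (Fin n) ℝ) (i j : Fin n) : ℝ :=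
  M.adjugate j i

/-!
Away from the origin `∇u = a x` and `D²u = a I + b x xᵀ`, with `a = 1 + c(2-n)|x|^{-n}` and
`b = cn(n-2)|x|^{-n-2}`. Hence `x` is an eigenvector of `D²u` with eigenvalue
`μ = a + b|x|² = 1 + c(n-1)(n-2)|x|^{-n}`, and, since `det D²u = a^{n-1} μ` by the matrix
determinant lemma, an eigenvector of `cof D²u` with eigenvalue `a^{n-1}`. So the sum equals
`a · a^{n-1} x₁² = (1 + ε)^n x₁²` with `ε = c(2-n)|x|^{-n}`, and
`(1 + ε)^n - 1 - nε = O(ε²)` leaves an error `O(|x|² |x|^{-2n}) ⊆ O(|x|^{1-n})`.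
-/

namespace Matrix

variable {ι : Type*} [Fintype ι] [DecidableEq ι]

theorem smul_vecMul_adjugate_of_vecMul_eq_smul {R : Type*} [CommRing R] {M : Matrix ι ι R}
    {v : ι → R} {μ : R} (hv : v ᵥ* M = μ • v) : μ • (v ᵥ* M.adjugate) = M.det • v := by
  rw [← smul_vecMul, ← hv, vecMul_vecMul, mul_adjugate, vecMul_smul, vecMul_one]

variable {K : Type*} [Field K]

theorem vecMul_adjugate_one_add_vecMulVec {u v : ι → K} (h : 1 + v ⬝ᵥ u ≠ 0) :
    v ᵥ* (1 + vecMulVec u v).adjugate = v := by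
  have hdet : (1 + vecMulVec u v).det = 1 + v ⬝ᵥ u := by
    rw [vecMulVec_eq Unit, det_one_add_replicateCol_mul_replicateRow]
  have hv : v ᵥ* (1 + vecMulVec u v) = (1 + v ⬝ᵥ u) • v := by
    rw [vecMul_add, vecMul_one, vecMul_vecMulVec, add_smul, one_smul]
  have h_smul := smul_vecMul_adjugate_of_vecMul_eq_smul hv
  rw [hdet] at h_smul
  exact smul_right_injective _ h h_smul

theorem vecMul_adjugate_smul_one_add_smul_vecMulVec {a b : K} {v : ι → K} (ha : a ≠ 0)
    (h : a + b * (v ⬝ᵥ v) ≠ 0) :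
    v ᵥ* (a • 1 + b • vecMulVec v v).adjugate = a ^ (Fintype.card ι - 1) • v := by
  have hM : a • 1 + b • vecMulVec v v = a • (1 + vecMulVec ((b / a) • v) v) := by
    rw [smul_add, smul_vecMulVec, smul_smul, mul_div_cancel₀ _ ha]
  have h' : 1 + v ⬝ᵥ (b / a) • v ≠ 0 := by
    rw [dotProduct_smul, smul_eq_mul, div_mul_eq_mul_div, one_add_div ha]
    exact div_ne_zero h ha
  rw [hM, adjugate_smul, vecMul_smul, vecMul_adjugate_one_add_vecMulVec h']

end Matrix

section NormRpow

variable {E : Type*} [NormedAddCommGroup E] [InnerProductSpace ℝ E] {x : E}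

theorem hasStrictFDerivAt_norm_rpow_of_ne_zero (p : ℝ) (hx : x ≠ 0) :
    HasStrictFDerivAt (fun y : E ↦ ‖y‖ ^ p) ((p * ‖x‖ ^ (p - 2)) • innerSL ℝ x) x := by
  have h := (hasStrictFDerivAt_norm_sq x).rpow_const (p := p / 2) (by simp [hx])
  simp only [← Real.rpow_natCast_mul (norm_nonneg _), ← Nat.cast_smul_eq_nsmul ℝ,
    smul_smul, Nat.cast_ofNat, mul_div_cancel₀ p two_ne_zero] at h
  convert h using 2
  ring_nf

theorem hasFDerivAt_one_add_mul_norm_rpow (d p : ℝ) (hx : x ≠ 0) :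
    HasFDerivAt (fun y : E ↦ 1 + d * ‖y‖ ^ p) ((d * (p * ‖x‖ ^ (p - 2))) • innerSL ℝ x) x := by
  have h := ((hasStrictFDerivAt_norm_rpow_of_ne_zero p hx).hasFDerivAt.const_mul d).const_add 1
  rwa [smul_smul] at h

end NormRpow

theorem dotProduct_ofLp_self {ι : Type*} [Fintype ι] (x : EuclideanSpace ℝ ι) :
    x.ofLp ⬝ᵥ x.ofLp = ‖x‖ ^ 2 := by
  rw [← real_inner_self_eq_norm_sq, EuclideanSpace.inner_eq_star_dotProduct]
  simp

theorem abs_one_add_pow_sub_one_sub_mul_le (m : ℕ) {ε : ℝ} (h : |ε| ≤ 1) :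
    |(1 + ε) ^ m - 1 - m * ε| ≤ 4 ^ m * ε ^ 2 := by
  induction m with
  | zero => simpa using sq_nonneg ε
  | succ k ih =>
    have h1 : |1 + ε| ≤ 2 := (abs_add_le 1 ε).trans (by rw [abs_one]; linarith)
    have hk : (k : ℝ) ≤ 2 * 4 ^ k := by
      have : (k : ℝ) < 2 ^ k := by exact_mod_cast Nat.lt_two_pow_self
      nlinarith [pow_le_pow_left₀ (by norm_num : (0 : ℝ) ≤ 2) (by norm_num : (2 : ℝ) ≤ 4) k]
    calc |(1 + ε) ^ (k + 1) - 1 - (k + 1 : ℕ) * ε|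
        = |(1 + ε) * ((1 + ε) ^ k - 1 - k * ε) + k * ε ^ 2| := by push_cast; ring_nf
      _ ≤ |1 + ε| * |(1 + ε) ^ k - 1 - k * ε| + k * ε ^ 2 := by
        grw [abs_add_le, abs_mul, abs_of_nonneg (by positivity : 0 ≤ (k : ℝ) * ε ^ 2)]
      _ ≤ 2 * (4 ^ k * ε ^ 2) + 2 * 4 ^ k * ε ^ 2 := by gcongr
      _ = 4 ^ (k + 1) * ε ^ 2 := by ring

theorem mul_rpow_neg_natCast_le_half {K r : ℝ} {n : ℕ} (hn : n ≠ 0) (hK : 0 ≤ K)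
    (hr : 2 * K + 1 ≤ r) : K * r ^ (-(n : ℝ)) ≤ 1 / 2 := by
  have hr1 : 1 ≤ r := by linarith
  have hw : r ^ (-(n : ℝ)) ≤ r⁻¹ := by
    rw [← Real.rpow_neg_one]
    exact Real.rpow_le_rpow_of_exponent_le hr1 (by simpa using Nat.one_le_iff_ne_zero.mpr hn)
  calc K * r ^ (-(n : ℝ)) ≤ K * r⁻¹ := by gcongr
    _ ≤ 1 / 2 := by rw [← div_eq_mul_inv, div_le_iff₀ (by linarith)]; linarith

theorem sq_mul_rpow_neg_sq_le {r : ℝ} {n : ℕ} (hn : n ≠ 0) (hr : 1 ≤ r) :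
    r ^ 2 * (r ^ (-(n : ℝ))) ^ 2 ≤ r ^ ((1 : ℝ) - n) := by
  have hn1 : (1 : ℝ) ≤ n := by exact_mod_cast Nat.one_le_iff_ne_zero.mpr hn
  have hr0 : 0 ≤ r := by linarith
  rw [← Real.rpow_natCast, ← Real.rpow_natCast, ← Real.rpow_mul hr0, ← Real.rpow_add (by linarith)]
  exact Real.rpow_le_rpow_of_exponent_le hr (by push_cast; linarith)

theorem abs_mul_rpow_le {d K r : ℝ} (p : ℝ) (hr : 0 ≤ r) (hd : |d| ≤ K) :
    |d * r ^ p| ≤ K * r ^ p := by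
  rw [abs_mul, abs_of_nonneg (Real.rpow_nonneg hr p)]
  exact mul_le_mul_of_nonneg_right hd (Real.rpow_nonneg hr p)

theorem one_add_mul_rpow_neg_natCast_ne_zero {d K r : ℝ} {n : ℕ} (hn : n ≠ 0) (hd : |d| ≤ K)
    (hr : 2 * K + 1 ≤ r) : 1 + d * r ^ (-(n : ℝ)) ≠ 0 := by
  have hK : 0 ≤ K := (abs_nonneg d).trans hd
  have hε := abs_mul_rpow_le (-(n : ℝ)) (by linarith : 0 ≤ r) hd
  have := neg_abs_le (d * r ^ (-(n : ℝ)))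
  have := mul_rpow_neg_natCast_le_half hn hK hr
  exact (by linarith : 0 < 1 + d * r ^ (-(n : ℝ))).ne'

theorem abs_one_add_mul_rpow_neg_pow_mul_sq_sub_le {d K r t : ℝ} {n : ℕ} (hn : n ≠ 0)
    (hd : |d| ≤ K) (hr : 2 * K + 1 ≤ r) (ht : |t| ≤ r) :
    |(1 + d * r ^ (-(n : ℝ))) ^ n * t ^ 2 - (t ^ 2 + n * (d * r ^ (-(n : ℝ))) * t ^ 2)| ≤
      (4 ^ n * K ^ 2 + 1) * r ^ ((1 : ℝ) - n) := by
  have hK : 0 ≤ K := (abs_nonneg d).trans hd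
  have hr1 : 1 ≤ r := by linarith
  have hKw := mul_rpow_neg_natCast_le_half hn hK hr
  have hε := abs_mul_rpow_le (-(n : ℝ)) (by linarith : 0 ≤ r) hd
  set ε := d * r ^ (-(n : ℝ))
  calc _ = |t ^ 2 * ((1 + ε) ^ n - 1 - n * ε)| := by congr 1; ring
    _ ≤ r ^ 2 * (4 ^ n * (K * r ^ (-(n : ℝ))) ^ 2) := by
      rw [abs_mul, abs_sq]
      gcongr ?_ * ?_
      · exact sq_le_sq.mpr (ht.trans (le_abs_self r))
      · refine (abs_one_add_pow_sub_one_sub_mul_le n (by linarith)).trans ?_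
        rw [← sq_abs ε]
        gcongr
    _ = 4 ^ n * K ^ 2 * (r ^ 2 * (r ^ (-(n : ℝ))) ^ 2) := by ring
    _ ≤ (4 ^ n * K ^ 2 + 1) * r ^ ((1 : ℝ) - n) := by
      grw [sq_mul_rpow_neg_sq_le hn hr1]
      gcongr
      linarith

noncomputable def perturbedQuadratic {n : ℕ} (c : ℝ) (y : EuclideanSpace ℝ (Fin n)) : ℝ :=
  ‖y‖ ^ 2 / 2 + c * ‖y‖ ^ ((2 : ℝ) - n)

section PerturbedQuadratic

variable {n : ℕ} (c : ℝ) {x : EuclideanSpace ℝ (Fin n)}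

theorem hasFDerivAt_perturbedQuadratic (hx : x ≠ 0) :
    HasFDerivAt (perturbedQuadratic c)
      ((1 + c * (2 - n) * ‖x‖ ^ (-(n : ℝ))) • innerSL ℝ x) x := by
  have h := (HasFDerivAt.mul_const (hasStrictFDerivAt_norm_sq x).hasFDerivAt 2⁻¹).add
    (HasFDerivAt.const_mul (hasStrictFDerivAt_norm_rpow_of_ne_zero ((2 : ℝ) - n) hx).hasFDerivAt c)
  have hf : perturbedQuadratic c =
      fun y : EuclideanSpace ℝ (Fin n) ↦ ‖y‖ ^ 2 * 2⁻¹ + c * ‖y‖ ^ ((2 : ℝ) - n) := by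
    funext y; rw [perturbedQuadratic, div_eq_mul_inv]
  rw [hf]
  refine h.congr_fderiv ?_
  ext v
  simp only [sub_sub_cancel_left, Real.rpow_neg_natCast, zpow_neg, zpow_natCast, add_apply,
    smul_apply, coe_innerSL_apply, nsmul_eq_mul, Nat.cast_ofNat, smul_eq_mul, ne_eq,
    OfNat.ofNat_ne_zero, not_false_eq_true, inv_mul_cancel_left₀]
  ring_nf

theorem pd_perturbedQuadratic (hx : x ≠ 0) (i : Fin n) :
    pd (perturbedQuadratic c) i x = (1 + c * (2 - n) * ‖x‖ ^ (-(n : ℝ))) * x i := by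
  simp [pd, (hasFDerivAt_perturbedQuadratic c hx).fderiv, EuclideanSpace.inner_single_right]

theorem hess_perturbedQuadratic (hx : x ≠ 0) :
    hess (perturbedQuadratic c) x = (1 + c * (2 - n) * ‖x‖ ^ (-(n : ℝ))) • 1 +
      (c * n * (n - 2) * ‖x‖ ^ (-(n : ℝ) - 2)) • Matrix.vecMulVec x.ofLp x.ofLp := by
  ext i j
  have hev : pd (perturbedQuadratic c) j =ᶠ[nhds x]
      fun y ↦ (1 + c * (2 - n) * ‖y‖ ^ (-(n : ℝ))) * y j := by
    filter_upwards [eventually_ne_nhds hx] with y hy using pd_perturbedQuadratic c hy j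
  have h : HasFDerivAt (fun y : EuclideanSpace ℝ (Fin n) ↦
      (1 + c * (2 - n) * ‖y‖ ^ (-(n : ℝ))) * y j) _ x :=
    (hasFDerivAt_one_add_mul_norm_rpow _ _ hx).mul (PiLp.hasFDerivAt_apply 2 x j)
  rw [hess, Matrix.of_apply, pd2, pd, hev.fderiv_eq, h.fderiv]
  simp only [Real.rpow_neg_natCast, zpow_neg, zpow_natCast, neg_mul, mul_neg, neg_smul, smul_neg,
    add_apply, smul_apply, PiLp.proj_apply, PiLp.single_apply, smul_eq_mul, mul_ite, mul_one,
    mul_zero, neg_apply, coe_innerSL_apply, inner_single_right, Real.ringHom_apply, one_mul,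
    Matrix.add_apply, Matrix.smul_apply, Matrix.one_apply, Matrix.vecMulVec_apply, @eq_comm _ j i]
  ring

open Matrix in
theorem sum_pd_mul_cof_hess_mul_perturbedQuadratic (hx : x ≠ 0)
    (ha : 1 + c * (2 - n) * ‖x‖ ^ (-(n : ℝ)) ≠ 0)
    (hμ : 1 + c * (n - 1) * (n - 2) * ‖x‖ ^ (-(n : ℝ)) ≠ 0) (i : Fin n) :
    ∑ j, pd (perturbedQuadratic c) i x * cof (hess (perturbedQuadratic c) x) i j * x j =
      (1 + c * (2 - n) * ‖x‖ ^ (-(n : ℝ))) ^ n * x i ^ 2 := by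
  have hμ' : 1 + c * (2 - n) * ‖x‖ ^ (-(n : ℝ)) +
      c * n * (n - 2) * ‖x‖ ^ (-(n : ℝ) - 2) * (x.ofLp ⬝ᵥ x.ofLp) ≠ 0 := by
    rw [dotProduct_ofLp_self, mul_assoc _ (‖x‖ ^ _),
      ← Real.rpow_add_natCast (norm_pos_iff.mpr hx).ne']
    convert hμ using 1
    push_cast; ring_nf
  have hadj := vecMul_adjugate_smul_one_add_smul_vecMulVec ha hμ'
  rw [← hess_perturbedQuadratic c hx, Fintype.card_fin] at hadj
  calc ∑ j, pd (perturbedQuadratic c) i x * cof (hess (perturbedQuadratic c) x) i j * x j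
      = pd (perturbedQuadratic c) i x * (x.ofLp ᵥ* (hess (perturbedQuadratic c) x).adjugate) i := by
        simp only [cof, vecMul, dotProduct, Finset.mul_sum]
        exact Finset.sum_congr rfl fun j _ ↦ by ring
    _ = _ := by
        rw [hadj, pd_perturbedQuadratic c hx, Pi.smul_apply, smul_eq_mul,
          ← mul_pow_sub_one i.pos.ne']
        ring

end PerturbedQuadratic

/-- For `u(x) = |x|²/2 + c|x|^{2-n}`,
`∑_j u₁ · cof(D²u)_{1j} · x_j = x₁² - cn(n-2)|x|^{-n}x₁² + O(|x|^{1-n})`. -/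
theorem flux_integrand_expansion {n : ℕ} (hn : 3 ≤ n) (c : ℝ) :
    ∃ C R : ℝ, 0 < C ∧ ∀ x : EuclideanSpace ℝ (Fin n), R ≤ ‖x‖ →
      |(∑ j : Fin n,
          pd (fun y => ‖y‖ ^ 2 / 2 + c * ‖y‖ ^ ((2 : ℝ) - n)) (⟨0, by omega⟩ : Fin n) x *
          cof (hess (fun y => ‖y‖ ^ 2 / 2 + c * ‖y‖ ^ ((2 : ℝ) - n)) x)
            (⟨0, by omega⟩ : Fin n) j * x j) -
        ((x ⟨0, by omega⟩) ^ 2 - c * n * ((n : ℝ) - 2) * ‖x‖ ^ (-(n : ℝ)) * (x ⟨0, by omega⟩) ^ 2)|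
      ≤ C * ‖x‖ ^ ((1 : ℝ) - n) := by
  have hn0 : n ≠ 0 := by omega
  have hn2 : (2 : ℝ) ≤ n := by exact_mod_cast (by omega : 2 ≤ n)
  set K : ℝ := |c| * n ^ 2
  have h2n : |c * (2 - n)| ≤ K := by
    rw [abs_mul, abs_of_nonpos (by linarith : (2 : ℝ) - n ≤ 0)]
    exact mul_le_mul_of_nonneg_left (by nlinarith) (abs_nonneg c)
  have h12 : |c * (n - 1) * (n - 2)| ≤ K := by
    rw [abs_mul, abs_mul, abs_of_nonneg (by linarith : (0 : ℝ) ≤ n - 1),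
      abs_of_nonneg (by linarith : (0 : ℝ) ≤ n - 2), mul_assoc]
    exact mul_le_mul_of_nonneg_left (by nlinarith) (abs_nonneg c)
  refine ⟨4 ^ n * K ^ 2 + 1, 2 * K + 1, by positivity, fun x hR => ?_⟩
  have hx : x ≠ 0 := norm_pos_iff.mp (by linarith [(abs_nonneg _).trans h2n])
  rw [show (fun y => ‖y‖ ^ 2 / 2 + c * ‖y‖ ^ ((2 : ℝ) - n)) = perturbedQuadratic c from rfl,
    sum_pd_mul_cof_hess_mul_perturbedQuadratic c hx
      (one_add_mul_rpow_neg_natCast_ne_zero hn0 h2n hR)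
      (one_add_mul_rpow_neg_natCast_ne_zero hn0 h12 hR)]
  convert abs_one_add_mul_rpow_neg_pow_mul_sq_sub_le hn0 h2n hR (PiLp.norm_apply_le x _)
    using 3
  ring
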